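/- For any w ∈ W and any subset J of simple reflections, the set {y ∈ W_J : y ≤ w} (Bruhat order) has a unique maximal element m(w,J). -/

import Mathlib

variable {B : Type*} {W : Type*} [Group W] {M : CoxeterMatrix B}

/-- The standard parabolic subgroup `W_J` generated by the simple reflections in `J`. -/
def parabolicSubgroup (cs : CoxeterSystem M W) (J : Set B) : Subgroup W :=
  Subgroup.closure (cs.simple '' J)

/-- Minimal-length representatives of the cosets `W_J\W`. -/
noncomputable def minCosetReps (cs : CoxeterSystem M W) (J : Set B) : Set W :=
  {v | ∀ u ∈ parabolicSubgroup cs J, cs.length v ≤ cs.length (u * v)}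

/-- The Bruhat order on a Coxeter group. -/
def bruhatLE (cs : CoxeterSystem M W) : W → W → Prop :=
  Relation.ReflTransGen fun a b =>
    (∃ t, cs.IsReflection t ∧ b = t * a) ∧ cs.length a < cs.length b


/-!
Induction on `ℓ w`. If `s = s i` is a left descent of `w` and `m'` is the maximum of `W_J` below
`s w`, then the maximum below `w` is `m'` when `s ∉ W_J` (an element of `W_J` has no left descent
outside `J`), and the larger of `m'`, `s m'` when `s ∈ W_J`. Both cases rest on the lifting
property of the Bruhat order: if `s w < w` and `y ≤ w`, then `s y ≤ w`, and `y ≤ s w` or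
`s y ≤ s w`. It follows from the subword property, which in turn comes from the strong exchange
condition; the latter is proved with Tits' sign representation of `W` on `W × {±1}`.
-/

open List

section

variable (cs : CoxeterSystem M W)

local prefix:100 "s" => cs.simple
local prefix:100 "π" => cs.wordProd
local prefix:100 "ℓ" => cs.length

namespace CoxeterSystem

theorem alternatingWord_two_mul_add_two (i j : B) (m : ℕ) :
    alternatingWord i j (2 * m + 2) = alternatingWord i j (2 * m) ++ [i, j] := by
  simp [alternatingWord]

theorem alternatingWord_two_mul_add_two' (i j : B) (m : ℕ) :
    alternatingWord i j (2 * m + 2) = i :: j :: alternatingWord i j (2 * m) := by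
  rw [alternatingWord_succ', alternatingWord_succ']
  simp

theorem reverse_alternatingWord_two_mul (i j : B) (m : ℕ) :
    (alternatingWord i j (2 * m)).reverse = alternatingWord j i (2 * m) := by
  induction m with
  | zero => rfl
  | succ m ih =>
    rw [mul_add_one, alternatingWord_two_mul_add_two', alternatingWord_two_mul_add_two]
    simp [ih]

theorem prod_map_alternatingWord_two_mul {G : Type*} [Monoid G] (f : B → G) (i j : B) (m : ℕ) :
    ((alternatingWord i j (2 * m)).map f).prod = (f i * f j) ^ m := by
  induction m with
  | zero => simp [alternatingWord]
  | succ m ih => rw [mul_add_one, alternatingWord_two_mul_add_two', map_cons, map_cons, prod_cons,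
      prod_cons, ih, pow_succ', mul_assoc]

theorem wordProd_alternatingWord_two_mul_eq_one (i j : B) :
    π (alternatingWord i j (2 * M i j)) = 1 := by
  simp [prod_alternatingWord_eq_mul_pow]

open scoped Classical

theorem even_count_leftInvSeq_alternatingWord (i j : B) (t : W) :
    Even ((cs.leftInvSeq (alternatingWord i j (2 * M i j))).count t) := by
  set l := cs.leftInvSeq (alternatingWord i j (2 * M i j))
  have hl : l.length = 2 * M i j := by simp [l]
  -- the `k`-th entry is `s i (s j s i) ^ k`, which has period `M i j` in `k`
  have hper : l.drop (M i j) = l.take (M i j) := by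
    refine List.ext_getElem (by simp [hl]; omega) fun k h₁ h₂ => ?_
    simp only [getElem_drop, getElem_take, l]
    simp only [length_drop, length_take, hl] at h₁ h₂
    rw [getElem_leftInvSeq_alternatingWord _ _ _ _ _ (by omega),
      getElem_leftInvSeq_alternatingWord _ _ _ _ _ (by omega),
      prod_alternatingWord_eq_mul_pow, prod_alternatingWord_eq_mul_pow,
      show (2 * (M i j + k) + 1) / 2 = M i j + k by omega, show (2 * k + 1) / 2 = k by omega,
      pow_add, simple_mul_simple_pow', one_mul]
    simp [parity_simps]
  rw [← take_append_drop (M i j) l, hper, count_append]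
  exact ⟨_, rfl⟩

/-- The action of `s i` in Tits' sign representation on `W × ℤˣ` (the first coordinate is meant
to be a reflection). -/
noncomputable def signFlip (i : B) : Equiv.Perm (W × ℤˣ) :=
  Function.Involutive.toPerm
    (fun p ↦ (s i * p.1 * s i, (if p.1 = s i then -1 else 1) * p.2)) <| by
    rintro ⟨t, ε⟩
    have hconj : s i * t * s i = s i ↔ t = s i := by
      constructor <;> intro h
      · simpa [mul_assoc] using congrArg (s i * · * s i) h
      · simp [h]
    simp only [hconj]
    refine Prod.ext (by simp [mul_assoc]) ?_
    split_ifs <;> simp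

theorem signFlip_apply (i : B) (t : W) (ε : ℤˣ) :
    cs.signFlip i (t, ε) = (s i * t * s i, (if t = s i then -1 else 1) * ε) :=
  rfl

theorem prod_map_signFlip_apply (ω : List B) (t : W) (ε : ℤˣ) :
    (ω.map cs.signFlip).prod (t, ε) =
      (π ω * t * (π ω)⁻¹, (-1) ^ (cs.rightInvSeq ω).count t * ε) := by
  induction ω with
  | nil => simp
  | cons i ω ih =>
    have hflip : π ω * t * (π ω)⁻¹ = s i ↔ (π ω)⁻¹ * s i * π ω = t := by
      constructor <;> intro h <;> simp [← h, mul_assoc]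
    rw [map_cons, prod_cons, Equiv.Perm.mul_apply, ih, signFlip_apply,
      wordProd_cons, rightInvSeq, count_cons]
    refine Prod.ext (by simp [mul_assoc]) ?_
    simp only [beq_iff_eq, ← hflip]
    split_ifs <;> simp [pow_succ]

theorem isLiftable_signFlip : M.IsLiftable cs.signFlip := by
  intro i j
  ext ⟨t, ε⟩ : 1
  have hcount : Even ((cs.rightInvSeq (alternatingWord i j (2 * M i j))).count t) := by
    rw [← reverse_alternatingWord_two_mul, rightInvSeq_reverse, count_reverse, M.symmetric]
    exact cs.even_count_leftInvSeq_alternatingWord j i t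
  rw [← prod_map_alternatingWord_two_mul, prod_map_signFlip_apply,
    wordProd_alternatingWord_two_mul_eq_one, hcount.neg_one_pow]
  simp

noncomputable def signRep : W →* Equiv.Perm (W × ℤˣ) :=
  cs.lift ⟨cs.signFlip, cs.isLiftable_signFlip⟩

theorem signRep_wordProd (ω : List B) : cs.signRep (π ω) = (ω.map cs.signFlip).prod := by
  rw [wordProd, map_list_prod, map_map]
  congr 1
  exact map_congr_left fun i _ ↦ cs.lift_apply_simple cs.isLiftable_signFlip i

noncomputable def reflSign (w t : W) : ℤˣ := (cs.signRep w (t, 1)).2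

theorem reflSign_wordProd (ω : List B) (t : W) :
    cs.reflSign (π ω) t = (-1) ^ (cs.rightInvSeq ω).count t := by
  simp [reflSign, signRep_wordProd, prod_map_signFlip_apply]

theorem signRep_apply (w t : W) (ε : ℤˣ) :
    cs.signRep w (t, ε) = (w * t * w⁻¹, cs.reflSign w t * ε) := by
  obtain ⟨ω, rfl⟩ := cs.wordProd_surjective w
  simp [reflSign_wordProd, signRep_wordProd, prod_map_signFlip_apply]

theorem reflSign_mul (v w t : W) :
    cs.reflSign (v * w) t = cs.reflSign v (w * t * w⁻¹) * cs.reflSign w t := by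
  have h := cs.signRep_apply (v * w) t 1
  rw [map_mul, Equiv.Perm.mul_apply, signRep_apply, signRep_apply] at h
  simpa using (congrArg Prod.snd h).symm

theorem IsReflection.reflSign_self {t : W} (ht : cs.IsReflection t) : cs.reflSign t t = -1 := by
  obtain ⟨u, i, rfl⟩ := ht
  have hsimple : cs.reflSign (s i) (s i) = -1 := by
    simpa using cs.reflSign_wordProd [i] (s i)
  have hconj : u⁻¹ * (u * s i * u⁻¹) * u⁻¹⁻¹ = s i := by group
  have hcancel := cs.reflSign_mul u u⁻¹ (u * s i * u⁻¹)
  rw [mul_inv_cancel, hconj, show cs.reflSign 1 _ = 1 by simp [reflSign]] at hcancel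
  rw [reflSign_mul, reflSign_mul, hconj, mul_inv_cancel_right, hsimple,
    mul_right_comm, ← hcancel, one_mul]

theorem mem_rightInvSeq_of_reflSign_eq_neg_one {ω : List B} {t : W}
    (h : cs.reflSign (π ω) t = -1) : t ∈ cs.rightInvSeq ω := by
  rw [reflSign_wordProd] at h
  refine count_pos_iff.mp (Nat.pos_of_ne_zero fun h0 ↦ ?_)
  rw [h0, pow_zero] at h
  exact absurd h (by decide)

theorem isRightInversion_iff_reflSign_eq_neg_one {w t : W} :
    cs.IsRightInversion w t ↔ cs.reflSign w t = -1 := by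
  have key : ∀ w, cs.reflSign w t = -1 → cs.IsRightInversion w t := by
    intro w h
    obtain ⟨ω, hω, rfl⟩ := cs.exists_isReduced w
    exact cs.isRightInversion_of_mem_rightInvSeq hω (cs.mem_rightInvSeq_of_reflSign_eq_neg_one h)
  refine ⟨fun h ↦ (Int.units_eq_one_or _).resolve_left fun h1 ↦ ?_, key w⟩
  have : cs.IsRightInversion (w * t) t := key _ <| by
    rw [reflSign_mul, h.1.reflSign_self, h.1.mul_self, one_mul, h.1.inv, h1, one_mul]
  exact h.1.not_isRightInversion_mul_left_iff.mpr h this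

theorem mem_leftInvSeq_of_isLeftInversion {ω : List B} {t : W}
    (h : cs.IsLeftInversion (π ω) t) : t ∈ cs.leftInvSeq ω := by
  rw [← isRightInversion_inv_iff, ← wordProd_reverse,
    isRightInversion_iff_reflSign_eq_neg_one] at h
  simpa [rightInvSeq_reverse] using cs.mem_rightInvSeq_of_reflSign_eq_neg_one h

theorem exists_wordProd_eraseIdx_eq_mul {ω : List B} {t : W}
    (h : cs.IsLeftInversion (π ω) t) : ∃ j, π (ω.eraseIdx j) = t * π ω := by
  obtain ⟨j, hj, rfl⟩ := mem_iff_getElem.mp (cs.mem_leftInvSeq_of_isLeftInversion h)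
  exact ⟨j, by rw [← getD_leftInvSeq_mul_wordProd, getD_eq_getElem]⟩

end CoxeterSystem

open CoxeterSystem

variable {cs}

theorem bruhatLE_refl (w : W) : bruhatLE cs w w := .refl

theorem bruhatLE.trans {u v w : W} (huv : bruhatLE cs u v) (hvw : bruhatLE cs v w) :
    bruhatLE cs u w :=
  Relation.ReflTransGen.trans huv hvw

theorem bruhatLE.length_le {v w : W} (h : bruhatLE cs v w) : ℓ v ≤ ℓ w := by
  induction h with
  | refl => rfl
  | tail _ hstep ih => exact ih.trans hstep.2.le

theorem bruhatLE.antisymm {v w : W} (hvw : bruhatLE cs v w) (hwv : bruhatLE cs w v) : v = w := by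
  rcases Relation.ReflTransGen.cases_tail hvw with h | ⟨u, hvu, hstep⟩
  · exact h.symm
  · exact absurd (hwv.trans hvu).length_le (not_le.mpr hstep.2)

theorem CoxeterSystem.IsLeftInversion.bruhatLE {w t : W} (h : cs.IsLeftInversion w t) :
    bruhatLE cs (t * w) w :=
  .single ⟨⟨t, h.1, by rw [← mul_assoc, h.1.mul_self, one_mul]⟩, h.2⟩

theorem bruhatLE_simple_mul_of_isLeftDescent {w : W} {i : B} (h : cs.IsLeftDescent w i) :
    bruhatLE cs (s i * w) w :=
  ((cs.isLeftInversion_simple_iff_isLeftDescent w i).mpr h).bruhatLE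

theorem bruhatLE_simple_mul_of_not_isLeftDescent {w : W} {i : B} (h : ¬cs.IsLeftDescent w i) :
    bruhatLE cs w (s i * w) := by
  rw [cs.isLeftDescent_iff_not_isLeftDescent_mul, not_not] at h
  simpa using bruhatLE_simple_mul_of_isLeftDescent h

theorem CoxeterSystem.IsReduced.bruhatLE_wordProd_eraseIdx {ω : List B} (hω : cs.IsReduced ω)
    (j : ℕ) : bruhatLE cs (π (ω.eraseIdx j)) (π ω) := by
  rcases lt_or_ge j ω.length with hj | hj
  · have ht := cs.isLeftInversion_of_mem_leftInvSeq hω (getElem_mem (by simpa using hj))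
    rw [← getD_leftInvSeq_mul_wordProd, getD_eq_getElem]
    exact ht.bruhatLE
  · rw [eraseIdx_of_length_le hj]
    exact bruhatLE_refl _

theorem CoxeterSystem.IsReduced.not_isLeftDescent_of_cons {ω : List B} {i : B}
    (h : cs.IsReduced (i :: ω)) : ¬cs.IsLeftDescent (π ω) i := by
  have := cs.length_wordProd_le ω
  rw [IsLeftDescent, ← wordProd_cons, h, length_cons]
  omega

theorem bruhatLE_simple_mul_mul_of_isLeftDescent {u t : W} {i : B}
    (ht : cs.IsLeftInversion u t) (hi : cs.IsLeftDescent u i) :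
    bruhatLE cs (s i * (t * u)) u := by
  obtain ⟨ρ, hρ, hρu⟩ := cs.exists_isReduced (s i * u)
  have hu : π (i :: ρ) = u := by rw [wordProd_cons, ← hρu, simple_mul_simple_cancel_left]
  obtain ⟨j, hj⟩ := cs.exists_wordProd_eraseIdx_eq_mul (hu ▸ ht)
  rw [hu] at hj
  cases j with
  | zero =>
    rw [← hj, eraseIdx_cons_zero, ← hρu, simple_mul_simple_cancel_left]
    exact bruhatLE_refl u
  | succ k =>
    rw [← hj, eraseIdx_cons_succ, wordProd_cons, simple_mul_simple_cancel_left]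
    exact (hρ.bruhatLE_wordProd_eraseIdx k).trans
      (hρu ▸ bruhatLE_simple_mul_of_isLeftDescent hi)

theorem bruhatLE.simple_mul_of_isLeftDescent {v w : W} {i : B} (hw : cs.IsLeftDescent w i)
    (h : bruhatLE cs v w) : bruhatLE cs (s i * v) w := by
  induction h using Relation.ReflTransGen.head_induction_on with
  | refl => exact bruhatLE_simple_mul_of_isLeftDescent hw
  | @head v _ hstep hrest ih =>
    obtain ⟨⟨t, ht, rfl⟩, hlt⟩ := hstep
    by_cases hd : cs.IsLeftDescent (t * v) i
    · have hinv : cs.IsLeftInversion (t * v) t :=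
        ⟨ht, by rwa [← mul_assoc, ht.mul_self, one_mul]⟩
      simpa [← mul_assoc, ht.mul_self] using
        (bruhatLE_simple_mul_mul_of_isLeftDescent hinv hd).trans hrest
    · -- conjugating the step `v → t v` by `s i` gives a step `s i v → s i t v`
      have heq : s i * t * (s i)⁻¹ * (s i * (t * v)) = s i * v := by
        simp [mul_assoc, ← mul_assoc t t, ht.mul_self]
      have hconj : cs.IsLeftInversion (s i * (t * v)) (s i * t * (s i)⁻¹) := by
        refine ⟨ht.conj (s i), ?_⟩
        rw [heq]
        rw [cs.not_isLeftDescent_iff] at hd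
        rcases cs.length_simple_mul v i with h | h <;> omega
      exact heq ▸ hconj.bruhatLE.trans ih

theorem bruhatLE.simple_mul_simple_mul {v w : W} {i : B} (hw : ¬cs.IsLeftDescent w i)
    (h : bruhatLE cs v w) : bruhatLE cs (s i * v) (s i * w) := by
  have hsw : cs.IsLeftDescent (s i * w) i := by
    rwa [cs.isLeftDescent_iff_not_isLeftDescent_mul, simple_mul_simple_cancel_left]
  exact (h.trans (bruhatLE_simple_mul_of_not_isLeftDescent hw)).simple_mul_of_isLeftDescent hsw

theorem CoxeterSystem.IsReduced.bruhatLE_wordProd_of_sublist {σ ω : List B}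
    (hω : cs.IsReduced ω) (h : σ <+ ω) : bruhatLE cs (π σ) (π ω) := by
  induction h with
  | slnil => exact bruhatLE_refl _
  | cons i _ ih => exact (ih (hω.drop 1)).trans (hω.bruhatLE_wordProd_eraseIdx 0)
  | cons_cons i _ ih =>
    rw [wordProd_cons, wordProd_cons]
    exact (ih (hω.drop 1)).simple_mul_simple_mul hω.not_isLeftDescent_of_cons

theorem bruhatLE.exists_sublist_wordProd_eq {v : W} {ω : List B} (h : bruhatLE cs v (π ω)) :
    ∃ σ, σ <+ ω ∧ π σ = v := by
  generalize hw : π ω = w at h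
  induction h generalizing ω with
  | refl => exact ⟨ω, Sublist.refl ω, hw⟩
  | tail _ hstep ih =>
    obtain ⟨⟨t, ht, rfl⟩, hlt⟩ := hstep
    have hinv : cs.IsLeftInversion (π ω) t :=
      ⟨ht, by rwa [hw, ← mul_assoc, ht.mul_self, one_mul]⟩
    obtain ⟨j, hj⟩ := cs.exists_wordProd_eraseIdx_eq_mul hinv
    obtain ⟨σ, hσ, rfl⟩ := ih (by rw [hj, hw, ← mul_assoc, ht.mul_self, one_mul])
    exact ⟨σ, hσ.trans (eraseIdx_sublist ω j), rfl⟩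

theorem bruhatLE.or_simple_mul {y w : W} (i : B) (h : bruhatLE cs y w) :
    bruhatLE cs y (s i * w) ∨ bruhatLE cs (s i * y) (s i * w) := by
  obtain ⟨ρ, hρ, hρw⟩ := cs.exists_isReduced (s i * w)
  have hw' : w = π (i :: ρ) := by rw [wordProd_cons, ← hρw, simple_mul_simple_cancel_left]
  obtain ⟨σ, hσ, rfl⟩ := (hw' ▸ h).exists_sublist_wordProd_eq
  rw [hρw]
  rcases sublist_cons_iff.mp hσ with hσ | ⟨r, rfl, hr⟩
  · exact .inl (hρ.bruhatLE_wordProd_of_sublist hσ)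
  · rw [wordProd_cons, simple_mul_simple_cancel_left]
    exact .inr (hρ.bruhatLE_wordProd_of_sublist hr)

theorem wordProd_mem_parabolicSubgroup {J : Set B} {ω : List B} (hω : ∀ b ∈ ω, b ∈ J) :
    π ω ∈ parabolicSubgroup cs J := by
  refine list_prod_mem fun x hx ↦ ?_
  obtain ⟨b, hb, rfl⟩ := mem_map.mp hx
  exact Subgroup.subset_closure (Set.mem_image_of_mem _ (hω b hb))

theorem exists_wordProd_eq_of_mem_parabolicSubgroup {J : Set B} {y : W}
    (hy : y ∈ parabolicSubgroup cs J) :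
    ∃ ω : List B, (∀ b ∈ ω, b ∈ J) ∧ π ω = y := by
  induction hy using Subgroup.closure_induction with
  | mem g hg =>
    obtain ⟨i, hi, rfl⟩ := hg
    exact ⟨[i], by simpa using hi, cs.wordProd_singleton i⟩
  | one => exact ⟨[], by simp, cs.wordProd_nil⟩
  | mul g h _ _ ihg ihh =>
    obtain ⟨ωg, hg, rfl⟩ := ihg
    obtain ⟨ωh, hh, rfl⟩ := ihh
    exact ⟨ωg ++ ωh, by simpa [or_imp, forall_and] using And.intro hg hh,
      cs.wordProd_append ωg ωh⟩
  | inv g _ ih =>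
    obtain ⟨ω, hω, rfl⟩ := ih
    exact ⟨ω.reverse, by simpa using hω, cs.wordProd_reverse ω⟩

theorem simple_mem_parabolicSubgroup_of_isLeftDescent {J : Set B} {y : W} {i : B}
    (hy : y ∈ parabolicSubgroup cs J) (hi : cs.IsLeftDescent y i) :
    s i ∈ parabolicSubgroup cs J := by
  obtain ⟨ω, hω, rfl⟩ := exists_wordProd_eq_of_mem_parabolicSubgroup hy
  obtain ⟨j, hj⟩ := cs.exists_wordProd_eraseIdx_eq_mul
    ((cs.isLeftInversion_simple_iff_isLeftDescent _ i).mpr hi)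
  rw [← mul_inv_cancel_right (s i) (π ω), ← hj]
  have hsub : ∀ b ∈ ω.eraseIdx j, b ∈ J :=
    fun b hb ↦ hω b ((eraseIdx_sublist ω j).subset hb)
  exact mul_mem (wordProd_mem_parabolicSubgroup hsub) (inv_mem (wordProd_mem_parabolicSubgroup hω))

variable (cs) in
def IsGreatestParabolicBelow (J : Set B) (w m : W) : Prop :=
  (m ∈ parabolicSubgroup cs J ∧ bruhatLE cs m w) ∧
    ∀ y ∈ parabolicSubgroup cs J, bruhatLE cs y w → bruhatLE cs y m

theorem IsGreatestParabolicBelow.of_simple_not_mem {J : Set B} {w m : W} {i : B}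
    (hw : cs.IsLeftDescent w i) (hi : s i ∉ parabolicSubgroup cs J)
    (hm : IsGreatestParabolicBelow cs J (s i * w) m) : IsGreatestParabolicBelow cs J w m := by
  obtain ⟨⟨hmJ, hmw⟩, hmax⟩ := hm
  refine ⟨⟨hmJ, hmw.trans (bruhatLE_simple_mul_of_isLeftDescent hw)⟩, fun y hyJ hyw ↦ ?_⟩
  have hy : ¬cs.IsLeftDescent y i := fun hd ↦
    hi (simple_mem_parabolicSubgroup_of_isLeftDescent hyJ hd)
  refine hmax y hyJ ((hyw.or_simple_mul i).elim id fun h ↦ ?_)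
  exact (bruhatLE_simple_mul_of_not_isLeftDescent hy).trans h

theorem IsGreatestParabolicBelow.exists_of_simple_mem {J : Set B} {w m' : W} {i : B}
    (hw : cs.IsLeftDescent w i) (hi : s i ∈ parabolicSubgroup cs J)
    (hm' : IsGreatestParabolicBelow cs J (s i * w) m') :
    ∃ m, IsGreatestParabolicBelow cs J w m := by
  obtain ⟨⟨hm'J, hm'w⟩, hmax⟩ := hm'
  have hm'w : bruhatLE cs m' w := hm'w.trans (bruhatLE_simple_mul_of_isLeftDescent hw)
  -- the larger of `m'` and `s i * m'`
  obtain ⟨m, hmJ, hm'm, hmw, hmi⟩ : ∃ m ∈ parabolicSubgroup cs J,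
      bruhatLE cs m' m ∧ bruhatLE cs m w ∧ cs.IsLeftDescent m i := by
    by_cases hd : cs.IsLeftDescent m' i
    · exact ⟨m', hm'J, bruhatLE_refl m', hm'w, hd⟩
    · refine ⟨s i * m', mul_mem hi hm'J, bruhatLE_simple_mul_of_not_isLeftDescent hd,
        hm'w.simple_mul_of_isLeftDescent hw, ?_⟩
      rwa [cs.isLeftDescent_iff_not_isLeftDescent_mul, simple_mul_simple_cancel_left]
  refine ⟨m, ⟨hmJ, hmw⟩, fun y hyJ hyw ↦ ?_⟩
  rcases hyw.or_simple_mul i with h | h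
  · exact (hmax y hyJ h).trans hm'm
  · simpa using ((hmax _ (mul_mem hi hyJ) h).trans hm'm).simple_mul_of_isLeftDescent hmi

variable (cs) in
theorem exists_isGreatestParabolicBelow (J : Set B) (w : W) :
    ∃ m, IsGreatestParabolicBelow cs J w m := by
  induction hn : ℓ w using Nat.strong_induction_on generalizing w with
  | _ n ih =>
  by_cases hw : w = 1
  · subst hw
    refine ⟨1, ⟨one_mem _, bruhatLE_refl 1⟩, fun y _ hy ↦ ?_⟩
    have hy1 : ℓ y = 0 := by simpa using hy.length_le
    rw [cs.length_eq_zero_iff.mp hy1]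
    exact bruhatLE_refl 1
  obtain ⟨i, hi⟩ := cs.exists_leftDescent_of_ne_one hw
  obtain ⟨m', hm'⟩ := ih _ (hn ▸ hi) (s i * w) rfl
  by_cases hJ : s i ∈ parabolicSubgroup cs J
  · exact hm'.exists_of_simple_mem hi hJ
  · exact ⟨m', hm'.of_simple_not_mem hi hJ⟩

end

theorem exists_unique_max_parabolic_below_general
    (cs : CoxeterSystem M W) (J : Set B) (w : W) :
    ∃! m : W, (m ∈ parabolicSubgroup cs J ∧ bruhatLE cs m w) ∧
      ∀ y ∈ parabolicSubgroup cs J, bruhatLE cs y w → bruhatLE cs y m := by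
  obtain ⟨m, hm⟩ := exists_isGreatestParabolicBelow cs J w
  refine ⟨m, hm, fun m' hm' ↦ ?_⟩
  exact (hm.2 m' hm'.1.1 hm'.1.2).antisymm (hm'.2 m hm.1.1 hm.1.2)

/-- `{y ∈ W_J : y ≤ w}` has a unique maximal element `m(w,J)`. -/
theorem exists_unique_max_parabolic_below
    [Finite W] (cs : CoxeterSystem M W) (J : Set B) (w : W) :
    ∃! m : W, (m ∈ parabolicSubgroup cs J ∧ bruhatLE cs m w) ∧
      ∀ y ∈ parabolicSubgroup cs J, bruhatLE cs y w → bruhatLE cs y m :=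
  exists_unique_max_parabolic_below_general cs J w
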